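/- arXiv:2207.04740 — 9 statements merged into one kernel-verified Lean document; each statement's English description precedes it below -/
import Mathlib

section
/- Let E and ℝ^m be finite-dimensional real normed spaces, let k and m be natural numbers, let B ⊆ E be any subset, and for i = 1,…,m let f_i^I, f_i^II : E → ℝ be C^k functions such that for every point b ∈ B and every l with 0 ≤ l ≤ k one has iteratedFDeriv ℝ l f_i^I b = iteratedFDeriv ℝ l f_i^II b. If F : ℝ^m → ℝ is a C^k function, then for every b ∈ B and every l with 0 ≤ l ≤ k, iteratedFDeriv ℝ l (fun z => F (f_1^I z, …, f_m^I z)) b = iteratedFDeriv ℝ l (fun z => F (f_1^II z, …, f_m^II z)) b. -/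
open Set

/-- **k-th order contact is a congruence w.r.t. composition with C^k functions.**
If the C^k functions `fI i` and `fII i` have k-th order contact along `B ⊆ E`
(all iterated Fréchet derivatives of order `l ≤ k` agree on `B`), and
`F : ℝ^m → ℝ` is C^k, then `F (fI 1, …, fI m)` and `F (fII 1, …, fII m)`
have k-th order contact along `B`. -/
theorem contact_congruence
    {E : Type*} [NormedAddCommGroup E] [NormedSpace ℝ E] [FiniteDimensional ℝ E]
    (k m : ℕ) (B : Set E)
    (fI fII : Fin m → E → ℝ)
    (hfI : ∀ i, ContDiff ℝ k (fI i)) (hfII : ∀ i, ContDiff ℝ k (fII i))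
    (hcontact : ∀ i, ∀ b ∈ B, ∀ l : ℕ, l ≤ k →
      iteratedFDeriv ℝ l (fI i) b = iteratedFDeriv ℝ l (fII i) b)
    (F : (Fin m → ℝ) → ℝ) (hF : ContDiff ℝ k F) :
    ∀ b ∈ B, ∀ l : ℕ, l ≤ k →
      iteratedFDeriv ℝ l (fun z => F (fun i => fI i z)) b
        = iteratedFDeriv ℝ l (fun z => F (fun i => fII i z)) b := by
  intro b hb l hl
  -- Taylor series of the pi maps
  set PI : E → FormalMultilinearSeries ℝ E (Fin m → ℝ) :=
    fun x n => ContinuousMultilinearMap.pi fun i => iteratedFDeriv ℝ n (fI i) x with hPIdef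
  set PII : E → FormalMultilinearSeries ℝ E (Fin m → ℝ) :=
    fun x n => ContinuousMultilinearMap.pi fun i => iteratedFDeriv ℝ n (fII i) x with hPIIdef
  have hgI : HasFTaylorSeriesUpToOn k (fun x i => fI i x) PI univ := by
    apply hasFTaylorSeriesUpToOn_pi.2
    intro i
    exact (hasFTaylorSeriesUpToOn_univ_iff.2 (contDiff_iff_ftaylorSeries.1 (hfI i)))
  have hgII : HasFTaylorSeriesUpToOn k (fun x i => fII i x) PII univ := by
    apply hasFTaylorSeriesUpToOn_pi.2
    intro i
    exact (hasFTaylorSeriesUpToOn_univ_iff.2 (contDiff_iff_ftaylorSeries.1 (hfII i)))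
  have hQ : HasFTaylorSeriesUpToOn k F (ftaylorSeries ℝ F) univ :=
    hasFTaylorSeriesUpToOn_univ_iff.2 (contDiff_iff_ftaylorSeries.1 hF)
  have hcompI :
      HasFTaylorSeriesUpToOn k (F ∘ fun x i => fI i x)
        (fun x => ((ftaylorSeries ℝ F) ((fun i => fI i x))).taylorComp (PI x)) univ :=
    hQ.comp hgI (mapsTo_univ _ _)
  have hcompII :
      HasFTaylorSeriesUpToOn k (F ∘ fun x i => fII i x)
        (fun x => ((ftaylorSeries ℝ F) ((fun i => fII i x))).taylorComp (PII x)) univ :=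
    hQ.comp hgII (mapsTo_univ _ _)
  have eqI : iteratedFDeriv ℝ l (fun z => F (fun i => fI i z)) b
      = ((ftaylorSeries ℝ F) (fun i => fI i b)).taylorComp (PI b) l := by
    rw [← iteratedFDerivWithin_univ]
    exact (hcompI.eq_iteratedFDerivWithin_of_uniqueDiffOn (by exact_mod_cast hl)
      uniqueDiffOn_univ (mem_univ b)).symm
  have eqII : iteratedFDeriv ℝ l (fun z => F (fun i => fII i z)) b
      = ((ftaylorSeries ℝ F) (fun i => fII i b)).taylorComp (PII b) l := by
    rw [← iteratedFDerivWithin_univ]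
    exact (hcompII.eq_iteratedFDerivWithin_of_uniqueDiffOn (by exact_mod_cast hl)
      uniqueDiffOn_univ (mem_univ b)).symm
  -- values coincide at b
  have hval : ∀ i, fI i b = fII i b := by
    intro i
    have h0 := hcontact i b hb 0 (Nat.zero_le _)
    have := congrArg (fun L => L (fun _ : Fin 0 => (0 : E))) h0
    simpa [iteratedFDeriv_zero_apply] using this
  have hvals : (fun i => fI i b) = (fun i => fII i b) := funext hval
  -- the series agree up to order k
  have hP : ∀ j : ℕ, j ≤ k → PI b j = PII b j := by
    intro j hj
    simp only [hPIdef, hPIIdef]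
    congr 1
    funext i
    exact hcontact i b hb j hj
  rw [eqI, eqII, hvals]
  -- compare the Taylor compositions term by term
  unfold FormalMultilinearSeries.taylorComp
  apply Finset.sum_congr rfl
  intro c _
  unfold FormalMultilinearSeries.compAlongOrderedFinpartition
  congr 1
  funext j
  exact hP _ (le_trans (c.partSize_le j) hl)
end

section
/- Let E, E' be finite-dimensional real normed spaces, k a natural number, B ⊆ E and B' ⊆ E' subsets, and φ : E' → E a C^k map with φ(B') ⊆ B. If f, g : E → ℝ are C^k functions such that for every b ∈ B and every l ≤ k, iteratedFDeriv ℝ l f b = iteratedFDeriv ℝ l g b, then for every b' ∈ B' and every l ≤ k, iteratedFDeriv ℝ l (f ∘ φ) b' = iteratedFDeriv ℝ l (g ∘ φ) b'. -/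
open Set

/-- **Contact conditions are preserved under C^k coordinate transformations.**
If `f, g : E → ℝ` are C^k and have k-th order contact along `B` (all iterated
Fréchet derivatives of order `l ≤ k` agree on `B`), and `φ : E' → E` is a C^k
map with `φ(B') ⊆ B`, then `f ∘ φ` and `g ∘ φ` have k-th order contact along `B'`. -/
theorem contact_preserved_under_coordinate_change
    {E : Type*} [NormedAddCommGroup E] [NormedSpace ℝ E] [FiniteDimensional ℝ E]
    {E' : Type*} [NormedAddCommGroup E'] [NormedSpace ℝ E'] [FiniteDimensional ℝ E']
    (k : ℕ) (B : Set E) (B' : Set E')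
    (φ : E' → E) (hφ : ContDiff ℝ k φ) (hmaps : φ '' B' ⊆ B)
    (f g : E → ℝ) (hf : ContDiff ℝ k f) (hg : ContDiff ℝ k g)
    (hcontact : ∀ b ∈ B, ∀ l : ℕ, l ≤ k →
      iteratedFDeriv ℝ l f b = iteratedFDeriv ℝ l g b) :
    ∀ b' ∈ B', ∀ l : ℕ, l ≤ k →
      iteratedFDeriv ℝ l (f ∘ φ) b' = iteratedFDeriv ℝ l (g ∘ φ) b' := by
  intro b' hb' l hl
  have hfT : HasFTaylorSeriesUpToOn (k : ℕ∞) f (ftaylorSeries ℝ f) univ :=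
    hasFTaylorSeriesUpToOn_univ_iff.2 (contDiff_iff_ftaylorSeries.1 hf)
  have hgT : HasFTaylorSeriesUpToOn (k : ℕ∞) g (ftaylorSeries ℝ g) univ :=
    hasFTaylorSeriesUpToOn_univ_iff.2 (contDiff_iff_ftaylorSeries.1 hg)
  have hφT : HasFTaylorSeriesUpToOn (k : ℕ∞) φ (ftaylorSeries ℝ φ) univ :=
    hasFTaylorSeriesUpToOn_univ_iff.2 (contDiff_iff_ftaylorSeries.1 hφ)
  have hmt : MapsTo φ univ univ := mapsTo_univ _ _
  have hcomp_f := hfT.comp hφT hmt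
  have hcomp_g := hgT.comp hφT hmt
  have hlk : (l : WithTop ℕ∞) ≤ (k : ℕ∞) := by exact_mod_cast hl
  have hφb : φ b' ∈ B := hmaps ⟨b', hb', rfl⟩
  have e1 : iteratedFDeriv ℝ l (f ∘ φ) b' =
      ((ftaylorSeries ℝ f (φ b')).taylorComp (ftaylorSeries ℝ φ b')) l := by
    rw [← iteratedFDerivWithin_univ]
    exact (hcomp_f.eq_iteratedFDerivWithin_of_uniqueDiffOn hlk uniqueDiffOn_univ
      (mem_univ b')).symm
  have e2 : iteratedFDeriv ℝ l (g ∘ φ) b' =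
      ((ftaylorSeries ℝ g (φ b')).taylorComp (ftaylorSeries ℝ φ b')) l := by
    rw [← iteratedFDerivWithin_univ]
    exact (hcomp_g.eq_iteratedFDerivWithin_of_uniqueDiffOn hlk uniqueDiffOn_univ
      (mem_univ b')).symm
  rw [e1, e2]
  unfold FormalMultilinearSeries.taylorComp
  refine Finset.sum_congr rfl fun c _ ↦ ?_
  have hcl : c.length ≤ k := le_trans (OrderedFinpartition.length_le c) hl
  unfold FormalMultilinearSeries.compAlongOrderedFinpartition
  have : ftaylorSeries ℝ f (φ b') c.length = ftaylorSeries ℝ g (φ b') c.length :=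
    hcontact _ hφb c.length hcl
  rw [this]
end

section
/- Let a, b, c, a', b', c' be real numbers. If there exists a nonzero vector (U₁, U₂) ∈ ℝ² such that a·U₁² + 2b·U₁U₂ + c·U₂² = 0 and a'·U₁² + 2b'·U₁U₂ + c'·U₂² = 0, then (a·c − b²)·(a'·c' − b'²) = ((a·c' + a'·c)/2 − b·b')². -/
/-- **Resultant condition for two homogeneous quadratics with a common nonzero root.**
If two binary quadratic forms `a·U₁² + 2b·U₁U₂ + c·U₂²` and
`a'·U₁² + 2b'·U₁U₂ + c'·U₂²` have a common nonzero zero `(U₁, U₂) ≠ (0,0)`,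
then `(ac − b²)(a'c' − b'²) = ((ac' + a'c)/2 − bb')²`. -/
theorem resultant_of_common_root (a b c a' b' c' : ℝ)
    (h : ∃ U : ℝ × ℝ, U ≠ 0 ∧
      a * U.1 ^ 2 + 2 * b * U.1 * U.2 + c * U.2 ^ 2 = 0 ∧
      a' * U.1 ^ 2 + 2 * b' * U.1 * U.2 + c' * U.2 ^ 2 = 0) :
    (a * c - b ^ 2) * (a' * c' - b' ^ 2) = ((a * c' + a' * c) / 2 - b * b') ^ 2 := by
  obtain ⟨⟨x, y⟩, hne, h1, h2⟩ := h
  simp only at h1 h2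
  rcases eq_or_ne y 0 with hy | hy
  · subst hy
    have hx : x ≠ 0 := fun hx => hne (by simp [hx, Prod.ext_iff])
    have ha : a = 0 := by
      have h1' : a * x ^ 2 = 0 := by linear_combination h1
      exact (mul_eq_zero.mp h1').resolve_right (pow_ne_zero 2 hx)
    have ha' : a' = 0 := by
      have h2' : a' * x ^ 2 = 0 := by linear_combination h2
      exact (mul_eq_zero.mp h2').resolve_right (pow_ne_zero 2 hx)
    subst ha; subst ha'; ring
  rcases eq_or_ne x 0 with hx | hx
  · subst hx
    have hc : c = 0 := by
      have h1' : c * y ^ 2 = 0 := by linear_combination h1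
      exact (mul_eq_zero.mp h1').resolve_right (pow_ne_zero 2 hy)
    have hc' : c' = 0 := by
      have h2' : c' * y ^ 2 = 0 := by linear_combination h2
      exact (mul_eq_zero.mp h2').resolve_right (pow_ne_zero 2 hy)
    subst hc; subst hc'; ring
  -- general case: x ≠ 0, y ≠ 0
  have e1 : (a * c' - a' * c) * x = 2 * (b' * c - b * c') * y := by
    have : ((a * c' - a' * c) * x - 2 * (b' * c - b * c') * y) * x = 0 := by
      linear_combination c' * h1 - c * h2
    have := (mul_eq_zero.mp this).resolve_right hx
    linarith
  have e2 : (a * c' - a' * c) * y = 2 * (a' * b - a * b') * x := by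
    have : ((a * c' - a' * c) * y - 2 * (a' * b - a * b') * x) * y = 0 := by
      linear_combination a * h2 - a' * h1
    have := (mul_eq_zero.mp this).resolve_right hy
    linarith
  have hR : (a * c' - a' * c) ^ 2 = 4 * (b' * c - b * c') * (a' * b - a * b') := by
    have hxy : x * y ≠ 0 := mul_ne_zero hx hy
    have : ((a * c' - a' * c) ^ 2 - 4 * (b' * c - b * c') * (a' * b - a * b')) * (x * y) = 0 := by
      linear_combination ((a * c' - a' * c) * y) * e1 + (2 * (b' * c - b * c') * y) * e2
    have := (mul_eq_zero.mp this).resolve_right hxy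
    linarith
  linear_combination (-1/4) * hR
end

section
/- Let Ω ⊆ ℝ² be open with x > 0 on Ω, and let f, u : Ω → ℝ be differentiable. Define h₁₁ = x²·cosh(u) − f²/cosh(u), h₁₂ = −f/cosh(u), h₂₂ = −1/cosh(u) on Ω (subscripts x and y denote partial derivatives). Then at every point b ∈ Ω with u(b) = 0 one has (h₁₁ₓ·h₂₂ₓ − h₁₂ₓ²)·(h₁₁ᵧ·h₂₂ᵧ − h₁₂ᵧ²) − ((h₁₁ₓ·h₂₂ᵧ + h₁₁ᵧ·h₂₂ₓ)/2 − h₁₂ₓ·h₁₂ᵧ)² = 0 at b; in other words, the first-order invariant det χ of the normalised Papapetrou vacuum metric vanishes on the hypersurface u = 0. -/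
/-! At `u = 0` the function `h₂₂ = −1/cosh u` is stationary, because `cosh` has a critical
point at `0`. With `h₂₂ₓ = h₂₂ᵧ = 0` both `χ₁₁ χ₂₂` and `χ₁₂²` reduce to `h₁₂ₓ² h₁₂ᵧ²`
(times `1/(det h)²`), so `det χ` vanishes whatever `h₁₁` and `h₁₂` are. -/

/-- Partial derivative with respect to the first coordinate of `ℝ × ℝ`. -/
noncomputable def pdx (f : ℝ × ℝ → ℝ) (p : ℝ × ℝ) : ℝ := fderiv ℝ f p (1, 0)

/-- Partial derivative with respect to the second coordinate of `ℝ × ℝ`. -/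
noncomputable def pdy (f : ℝ × ℝ → ℝ) (p : ℝ × ℝ) : ℝ := fderiv ℝ f p (0, 1)

open Real

theorem Real.hasDerivAt_neg_one_div_cosh (x : ℝ) :
    HasDerivAt (fun y => -1 / cosh y) (sinh x / cosh x ^ 2) x := by
  refine ((hasDerivAt_const x (-1 : ℝ)).div (hasDerivAt_cosh x) (cosh_pos x).ne').congr_deriv ?_
  ring

theorem detChi_numerator_eq_zero_of_fderiv_eq_zero {h11 h12 h22 : ℝ × ℝ → ℝ} {b : ℝ × ℝ}
    (h22_stationary : fderiv ℝ h22 b = 0) :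
    (pdx h11 b * pdx h22 b - (pdx h12 b) ^ 2) *
        (pdy h11 b * pdy h22 b - (pdy h12 b) ^ 2) -
      ((pdx h11 b * pdy h22 b + pdy h11 b * pdx h22 b) / 2 -
        pdx h12 b * pdy h12 b) ^ 2 = 0 := by
  simp only [pdx, pdy, h22_stationary, zero_apply]
  ring

theorem papapetrou_detChi_eq_zero_on_boundary_general
    (Ω : Set (ℝ × ℝ))
    (u : ℝ × ℝ → ℝ)
    (hu : ∀ p ∈ Ω, DifferentiableAt ℝ u p)
    (h11 h12 h22 : ℝ × ℝ → ℝ)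
    (hh22 : ∀ p : ℝ × ℝ, h22 p = -1 / Real.cosh (u p)) :
    ∀ b ∈ Ω, u b = 0 →
      (pdx h11 b * pdx h22 b - (pdx h12 b) ^ 2) *
        (pdy h11 b * pdy h22 b - (pdy h12 b) ^ 2) -
      ((pdx h11 b * pdy h22 b + pdy h11 b * pdx h22 b) / 2 -
        pdx h12 b * pdy h12 b) ^ 2 = 0 := by
  intro b hb hub
  apply detChi_numerator_eq_zero_of_fderiv_eq_zero
  have h_outer : HasDerivAt (fun y => -1 / cosh y) 0 (u b) := by
    simpa [hub] using Real.hasDerivAt_neg_one_div_cosh (u b)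
  have h22_eq : h22 = (fun y => -1 / cosh y) ∘ u := funext hh22
  simpa [h22_eq] using (h_outer.comp_hasFDerivAt b (hu b hb).hasFDerivAt).fderiv

/-- **The invariant det χ of the normalised Papapetrou vacuum metric vanishes
on the hypersurface u = 0.**  The Killing part of the normalised Papapetrou
metric is `h₁₁ = x² cosh u − f²/cosh u`, `h₁₂ = −f/cosh u`, `h₂₂ = −1/cosh u`;
at every point of `Ω` where `u = 0` one has
`(h₁₁ₓh₂₂ₓ − h₁₂ₓ²)(h₁₁ᵧh₂₂ᵧ − h₁₂ᵧ²) − ((h₁₁ₓh₂₂ᵧ + h₁₁ᵧh₂₂ₓ)/2 − h₁₂ₓh₁₂ᵧ)² = 0`. -/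
theorem papapetrou_detChi_eq_zero_on_boundary
    (Ω : Set (ℝ × ℝ)) (hΩ : IsOpen Ω) (hx : ∀ p ∈ Ω, 0 < p.1)
    (f u : ℝ × ℝ → ℝ)
    (hf : ∀ p ∈ Ω, DifferentiableAt ℝ f p)
    (hu : ∀ p ∈ Ω, DifferentiableAt ℝ u p)
    (h11 h12 h22 : ℝ × ℝ → ℝ)
    (hh11 : ∀ p : ℝ × ℝ, h11 p = p.1 ^ 2 * Real.cosh (u p) - f p ^ 2 / Real.cosh (u p))
    (hh12 : ∀ p : ℝ × ℝ, h12 p = -f p / Real.cosh (u p))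
    (hh22 : ∀ p : ℝ × ℝ, h22 p = -1 / Real.cosh (u p)) :
    ∀ b ∈ Ω, u b = 0 →
      (pdx h11 b * pdx h22 b - (pdx h12 b) ^ 2) *
        (pdy h11 b * pdy h22 b - (pdy h12 b) ^ 2) -
      ((pdx h11 b * pdy h22 b + pdy h11 b * pdx h22 b) / 2 -
        pdx h12 b * pdy h12 b) ^ 2 = 0 :=
  papapetrou_detChi_eq_zero_on_boundary_general Ω u hu h11 h12 h22 hh22
end

section
/- Let E be a finite-dimensional real normed space, let u, g : E → ℝ be functions differentiable at a point b ∈ E, and suppose u(b) = 0. Then the function z ↦ g(z)·cosh(u(z)) has the same value and the same Fréchet derivative at b as g, and likewise the function z ↦ g(z)/cosh(u(z)) has the same value and the same Fréchet derivative at b as g. -/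
/-!
Since `cosh' = sinh` vanishes at `0`, the factor `cosh ∘ u` equals `1` and has zero derivative
at every zero of `u`, and so does its reciprocal; by the product rule, multiplying `g` by such a
factor changes neither its value nor its derivative there.
-/

section FirstOrderUnit

variable {𝕜 : Type*} [NontriviallyNormedField 𝕜] {E : Type*} [NormedAddCommGroup E]
  [NormedSpace 𝕜 E] {b : E}

theorem HasFDerivAt.mul_of_hasFDerivAt_zero_of_eq_one {𝔸 : Type*} [NormedCommRing 𝔸]
    [NormedAlgebra 𝕜 𝔸] {g h : E → 𝔸} {g' : E →L[𝕜] 𝔸} (hg : HasFDerivAt g g' b)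
    (hh : HasFDerivAt h (0 : E →L[𝕜] 𝔸) b) (hb : h b = 1) :
    HasFDerivAt (fun z => g z * h z) g' b := by
  convert hg.fun_mul hh using 1
  ext v
  simp [hb]

theorem HasFDerivAt.inv_of_hasFDerivAt_zero {R : Type*} [NormedDivisionRing R]
    [NormedAlgebra 𝕜 R] {h : E → R} (hh : HasFDerivAt h (0 : E →L[𝕜] R) b) (hb : h b ≠ 0) :
    HasFDerivAt (fun z => (h z)⁻¹) (0 : E →L[𝕜] R) b := by
  have hinv := (hasFDerivAt_inv' hb).comp b hh
  rwa [ContinuousLinearMap.comp_zero] at hinv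

theorem HasFDerivAt.div_of_hasFDerivAt_zero_of_eq_one {𝕜' : Type*} [NormedField 𝕜']
    [NormedAlgebra 𝕜 𝕜'] {g h : E → 𝕜'} {g' : E →L[𝕜] 𝕜'} (hg : HasFDerivAt g g' b)
    (hh : HasFDerivAt h (0 : E →L[𝕜] 𝕜') b) (hb : h b = 1) :
    HasFDerivAt (fun z => g z / h z) g' b := by
  simpa only [div_eq_mul_inv] using hg.mul_of_hasFDerivAt_zero_of_eq_one
    (hh.inv_of_hasFDerivAt_zero (hb ▸ one_ne_zero)) (by rw [hb, inv_one])

end FirstOrderUnit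

theorem HasFDerivAt.cosh_of_eq_zero {E : Type*} [NormedAddCommGroup E] [NormedSpace ℝ E]
    {u : E → ℝ} {u' : E →L[ℝ] ℝ} {b : E} (hu : HasFDerivAt u u' b) (hub : u b = 0) :
    HasFDerivAt (fun z => Real.cosh (u z)) (0 : E →L[ℝ] ℝ) b := by
  simpa [hub] using hu.cosh

theorem firstOrderContact_mul_div_cosh_general
    {E : Type*} [NormedAddCommGroup E] [NormedSpace ℝ E]
    (u g : E → ℝ) (b : E)
    (hu : DifferentiableAt ℝ u b) (hg : DifferentiableAt ℝ g b)
    (hub : u b = 0) :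
    (g b * Real.cosh (u b) = g b ∧
      fderiv ℝ (fun z => g z * Real.cosh (u z)) b = fderiv ℝ g b) ∧
    (g b / Real.cosh (u b) = g b ∧
      fderiv ℝ (fun z => g z / Real.cosh (u z)) b = fderiv ℝ g b) := by
  have hcosh := hu.hasFDerivAt.cosh_of_eq_zero hub
  have hcosh_one : Real.cosh (u b) = 1 := by rw [hub, Real.cosh_zero]
  refine ⟨⟨by rw [hcosh_one, mul_one], ?_⟩, ⟨by rw [hcosh_one, div_one], ?_⟩⟩
  · exact (hg.hasFDerivAt.mul_of_hasFDerivAt_zero_of_eq_one hcosh hcosh_one).fderiv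
  · exact (hg.hasFDerivAt.div_of_hasFDerivAt_zero_of_eq_one hcosh hcosh_one).fderiv

/-- **Multiplication or division by `cosh ∘ u` preserves first-order contact at
zeros of `u`.**  If `u, g : E → ℝ` are differentiable at `b` and `u b = 0`, then
`g · (cosh ∘ u)` and `g / (cosh ∘ u)` have the same value and the same Fréchet
derivative at `b` as `g`. -/
theorem firstOrderContact_mul_div_cosh
    {E : Type*} [NormedAddCommGroup E] [NormedSpace ℝ E] [FiniteDimensional ℝ E]
    (u g : E → ℝ) (b : E)
    (hu : DifferentiableAt ℝ u b) (hg : DifferentiableAt ℝ g b)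
    (hub : u b = 0) :
    (g b * Real.cosh (u b) = g b ∧
      fderiv ℝ (fun z => g z * Real.cosh (u z)) b = fderiv ℝ g b) ∧
    (g b / Real.cosh (u b) = g b ∧
      fderiv ℝ (fun z => g z / Real.cosh (u z)) b = fderiv ℝ g b) :=
  firstOrderContact_mul_div_cosh_general u g b hu hg hub
end

section
/- Let Ω ⊆ ℝ² be open and connected with x > 0 at every point (x,y) ∈ Ω, and let v, w : Ω → ℝ be C² with v > 0 and w_y ≠ 0 on Ω (subscripts denote partial derivatives). Assume on Ω: (i) w_xx + w_yy − w_x/x = −2(v_x w_x + v_y w_y)/v, (ii) v_xx + v_yy + v_x/x = (v_x² + v_y²)/v − v³(w_x² + w_y²)/x², and (iii) v_x w_x + v_y w_y = 0. Then the function c² := x²·v_x²/(v²·w_y²) + v² has vanishing partial derivatives (c²)_x = (c²)_y = 0 on Ω, i.e. it is constant on Ω. -/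
open Filter Topology

section PartialDerivatives

variable {f : ℝ × ℝ → ℝ} {p : ℝ × ℝ}

@[simp] theorem fderiv_apply_one_zero (f : ℝ × ℝ → ℝ) (p : ℝ × ℝ) :
    fderiv ℝ f p (1, 0) = pdx f p := rfl

@[simp] theorem fderiv_apply_zero_one (f : ℝ × ℝ → ℝ) (p : ℝ × ℝ) :
    fderiv ℝ f p (0, 1) = pdy f p := rfl

theorem fderiv_eq_zero_of_pdx_pdy (hx : pdx f p = 0) (hy : pdy f p = 0) :
    fderiv ℝ f p = 0 := by
  ext
  · exact hx
  · exact hy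

theorem ContDiffAt.differentiableAt_fderiv (hf : ContDiffAt ℝ 2 f p) :
    DifferentiableAt ℝ (fderiv ℝ f) p :=
  (hf.fderiv_right (m := 1) (by norm_num)).differentiableAt (by norm_num)

theorem ContDiffAt.differentiableAt_pdx (hf : ContDiffAt ℝ 2 f p) :
    DifferentiableAt ℝ (pdx f) p :=
  hf.differentiableAt_fderiv.clm_apply (differentiableAt_const _)

theorem ContDiffAt.differentiableAt_pdy (hf : ContDiffAt ℝ 2 f p) :
    DifferentiableAt ℝ (pdy f) p :=
  hf.differentiableAt_fderiv.clm_apply (differentiableAt_const _)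

theorem ContDiffAt.pdy_pdx (hf : ContDiffAt ℝ 2 f p) : pdy (pdx f) p = pdx (pdy f) p := by
  have hsymm := hf.isSymmSndFDerivAt (by simp [minSmoothness_of_isRCLikeNormedField])
  change fderiv ℝ (fun q => fderiv ℝ f q (1, 0)) p (0, 1)
    = fderiv ℝ (fun q => fderiv ℝ f q (0, 1)) p (1, 0)
  rw [fderiv_clm_apply hf.differentiableAt_fderiv (differentiableAt_const _),
    fderiv_clm_apply hf.differentiableAt_fderiv (differentiableAt_const _)]
  simpa using hsymm.eq (0, 1) (1, 0)

end PartialDerivatives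

namespace Papapetrou

noncomputable def cSq (v w : ℝ × ℝ → ℝ) (q : ℝ × ℝ) : ℝ :=
  q.1 ^ 2 * (pdx v q) ^ 2 / ((v q) ^ 2 * (pdy w q) ^ 2) + (v q) ^ 2

/-- Here `a, b, p, q` stand for `v_x, v_y, w_x, w_y` and `A, B, C, P, Q, R` for
`v_xx, v_xy, v_yy, w_xx, w_xy, w_yy`; `h3x`, `h3y` are the partials of (iii), and the two
conclusions are `v³ w_y³ / 2` times `(c²)_x` and `(c²)_y`. -/
theorem numerators_eq_zero {x v a b p q A B C P Q R : ℝ} (hx : x ≠ 0) (hv : v ≠ 0) (hq : q ≠ 0)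
    (h1 : P + R - p / x = -2 * (a * p + b * q) / v)
    (h2 : A + C + a / x = (a ^ 2 + b ^ 2) / v - v ^ 3 * (p ^ 2 + q ^ 2) / x ^ 2)
    (h3 : a * p + b * q = 0) (h3x : A * p + a * P + B * q + b * Q = 0)
    (h3y : B * p + a * Q + C * q + b * R = 0) :
    x * a ^ 2 * v * q + x ^ 2 * a * A * v * q - x ^ 2 * a ^ 3 * q - x ^ 2 * a ^ 2 * Q * v
        + v ^ 4 * a * q ^ 3 = 0 ∧
      x ^ 2 * a * B * v * q - x ^ 2 * a ^ 2 * b * q - x ^ 2 * a ^ 2 * R * v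
        + v ^ 4 * b * q ^ 3 = 0 := by
  rw [h3, mul_zero, zero_div, sub_eq_zero, eq_div_iff hx] at h1
  field_simp at h2
  set Gx := x * a ^ 2 * v * q + x ^ 2 * a * A * v * q - x ^ 2 * a ^ 3 * q
    - x ^ 2 * a ^ 2 * Q * v + v ^ 4 * a * q ^ 3
  set Gy := x ^ 2 * a * B * v * q - x ^ 2 * a ^ 2 * b * q - x ^ 2 * a ^ 2 * R * v
    + v ^ 4 * b * q ^ 3
  have hdot : Gx * p + Gy * q = 0 := by
    linear_combination (v ^ 4 * q ^ 3 - x ^ 2 * a ^ 2 * q - x ^ 2 * a * v * Q) * h3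
      + x ^ 2 * a * v * q * h3x - x * a ^ 2 * q * v * h1
  have hcross : Gx * q - Gy * p = 0 := by
    linear_combination -x ^ 2 * a * v * q * h3y
      + (x ^ 2 * a * v * R + x ^ 2 * a * b * q - v ^ 4 * p * q ^ 2) * h3 + a * q ^ 2 * h2
  have hN : p ^ 2 + q ^ 2 ≠ 0 := by positivity
  constructor
  · refine (mul_eq_zero.1 ?_).resolve_left hN
    linear_combination p * hdot + q * hcross
  · refine (mul_eq_zero.1 ?_).resolve_left hN
    linear_combination q * hdot - p * hcross

section Derivatives

variable {v w : ℝ × ℝ → ℝ} {p : ℝ × ℝ}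

theorem hasFDerivAt_cSq (hv : DifferentiableAt ℝ v p) (hvx : DifferentiableAt ℝ (pdx v) p)
    (hwy : DifferentiableAt ℝ (pdy w) p) (hv0 : v p ≠ 0) (hwy0 : pdy w p ≠ 0) :
    HasFDerivAt (cSq v w)
      ((2 * p.1 * pdx v p ^ 2 / (v p ^ 2 * pdy w p ^ 2)) • ContinuousLinearMap.fst ℝ ℝ ℝ
        + (2 * p.1 ^ 2 * pdx v p / (v p ^ 2 * pdy w p ^ 2)) • fderiv ℝ (pdx v) p
        - (2 * p.1 ^ 2 * pdx v p ^ 2 / (v p ^ 2 * pdy w p ^ 3)) • fderiv ℝ (pdy w) p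
        + (2 * v p - 2 * p.1 ^ 2 * pdx v p ^ 2 / (v p ^ 3 * pdy w p ^ 2)) • fderiv ℝ v p) p := by
  have hden : v p ^ 2 * pdy w p ^ 2 ≠ 0 := by positivity
  have h := (((hasFDerivAt_fst.pow 2).fun_mul (hvx.hasFDerivAt.pow 2)).fun_mul
    ((hasDerivAt_inv hden).comp_hasFDerivAt p
      ((hv.hasFDerivAt.pow 2).fun_mul (hwy.hasFDerivAt.pow 2)))).fun_add (hv.hasFDerivAt.pow 2)
  refine (h.congr_fderiv ?_).congr_of_eventuallyEq (.of_forall fun q => ?_)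
  · ext <;> simp <;> field_simp <;> ring
  · simp [cSq, div_eq_mul_inv]

theorem pdx_cSq (hv : DifferentiableAt ℝ v p) (hvx : DifferentiableAt ℝ (pdx v) p)
    (hwy : DifferentiableAt ℝ (pdy w) p) (hv0 : v p ≠ 0) (hwy0 : pdy w p ≠ 0) :
    pdx (cSq v w) p = 2 * (p.1 * pdx v p ^ 2 * v p * pdy w p
      + p.1 ^ 2 * pdx v p * pdx (pdx v) p * v p * pdy w p - p.1 ^ 2 * pdx v p ^ 3 * pdy w p
      - p.1 ^ 2 * pdx v p ^ 2 * pdx (pdy w) p * v p + v p ^ 4 * pdx v p * pdy w p ^ 3)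
        / (v p ^ 3 * pdy w p ^ 3) := by
  rw [pdx, (hasFDerivAt_cSq hv hvx hwy hv0 hwy0).fderiv]
  simp only [add_apply, sub_apply, smul_apply, ContinuousLinearMap.coe_fst', smul_eq_mul, mul_one,
    fderiv_apply_one_zero]
  field_simp
  ring

theorem pdy_cSq (hv : DifferentiableAt ℝ v p) (hvx : DifferentiableAt ℝ (pdx v) p)
    (hwy : DifferentiableAt ℝ (pdy w) p) (hv0 : v p ≠ 0) (hwy0 : pdy w p ≠ 0) :
    pdy (cSq v w) p = 2 * (p.1 ^ 2 * pdx v p * pdy (pdx v) p * v p * pdy w p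
      - p.1 ^ 2 * pdx v p ^ 2 * pdy v p * pdy w p - p.1 ^ 2 * pdx v p ^ 2 * pdy (pdy w) p * v p
      + v p ^ 4 * pdy v p * pdy w p ^ 3) / (v p ^ 3 * pdy w p ^ 3) := by
  rw [pdy, (hasFDerivAt_cSq hv hvx hwy hv0 hwy0).fderiv]
  simp only [add_apply, sub_apply, smul_apply, ContinuousLinearMap.coe_fst', smul_eq_mul, mul_zero,
    fderiv_apply_zero_one, zero_add]
  field_simp
  ring

theorem partials_of_orthogonality (hv : ContDiffAt ℝ 2 v p) (hw : ContDiffAt ℝ 2 w p)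
    (horth : (fun q => pdx v q * pdx w q + pdy v q * pdy w q) =ᶠ[𝓝 p] 0) :
    pdx (pdx v) p * pdx w p + pdx v p * pdx (pdx w) p + pdy (pdx v) p * pdy w p
        + pdy v p * pdx (pdy w) p = 0 ∧
      pdy (pdx v) p * pdx w p + pdx v p * pdx (pdy w) p + pdy (pdy v) p * pdy w p
        + pdy v p * pdy (pdy w) p = 0 := by
  have hG := ((hv.differentiableAt_pdx.hasFDerivAt.fun_mul
    hw.differentiableAt_pdx.hasFDerivAt).fun_add
      (hv.differentiableAt_pdy.hasFDerivAt.fun_mul hw.differentiableAt_pdy.hasFDerivAt)).fderiv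
  rw [horth.fderiv_eq, fderiv_zero] at hG
  have hdx := congr($hG (1, 0))
  have hdy := congr($hG (0, 1))
  simp only [add_apply, smul_apply, smul_eq_mul, Pi.zero_apply, zero_apply,
    fderiv_apply_one_zero, fderiv_apply_zero_one] at hdx hdy
  rw [← hv.pdy_pdx] at hdx
  rw [hw.pdy_pdx] at hdy
  constructor
  · linear_combination -hdx
  · linear_combination -hdy

theorem pdx_pdy_cSq_eq_zero (hv : ContDiffAt ℝ 2 v p) (hw : ContDiffAt ℝ 2 w p)
    (hx : p.1 ≠ 0) (hv0 : v p ≠ 0) (hwy : pdy w p ≠ 0)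
    (h1 : pdx (pdx w) p + pdy (pdy w) p - pdx w p / p.1 =
      -2 * (pdx v p * pdx w p + pdy v p * pdy w p) / v p)
    (h2 : pdx (pdx v) p + pdy (pdy v) p + pdx v p / p.1 =
      ((pdx v p) ^ 2 + (pdy v p) ^ 2) / v p -
        (v p) ^ 3 * ((pdx w p) ^ 2 + (pdy w p) ^ 2) / p.1 ^ 2)
    (horth : (fun q => pdx v q * pdx w q + pdy v q * pdy w q) =ᶠ[𝓝 p] 0) :
    pdx (cSq v w) p = 0 ∧ pdy (cSq v w) p = 0 := by
  obtain ⟨h3x, h3y⟩ := partials_of_orthogonality hv hw horth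
  obtain ⟨hGx, hGy⟩ := numerators_eq_zero hx hv0 hwy h1 h2 horth.eq_of_nhds h3x h3y
  have hvd := hv.differentiableAt (by norm_num)
  rw [pdx_cSq hvd hv.differentiableAt_pdx hw.differentiableAt_pdy hv0 hwy,
    pdy_cSq hvd hv.differentiableAt_pdx hw.differentiableAt_pdy hv0 hwy, hGx, hGy]
  simp

end Derivatives

end Papapetrou

/-- **`c² = x²v_x²/(v²w_y²) + v²` is a first integral of the Papapetrou
system.**  If `(v, w)` solves the reduced vacuum Einstein equations together
with Papapetrou's condition on a connected open set `Ω ⊆ {x > 0}` with `v > 0`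
and `w_y ≠ 0`, then the partial derivatives of `c²` vanish on `Ω`, i.e. `c²`
is constant on `Ω`. -/
theorem papapetrou_first_integral
    (Ω : Set (ℝ × ℝ)) (hΩ : IsOpen Ω) (hconn : IsConnected Ω)
    (hx : ∀ p ∈ Ω, 0 < p.1)
    (v w : ℝ × ℝ → ℝ)
    (hv : ContDiffOn ℝ 2 v Ω) (hw : ContDiffOn ℝ 2 w Ω)
    (hvpos : ∀ p ∈ Ω, 0 < v p)
    (hwy : ∀ p ∈ Ω, pdy w p ≠ 0)
    (heq1 : ∀ p ∈ Ω,
      pdx (pdx w) p + pdy (pdy w) p - pdx w p / p.1 =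
        -2 * (pdx v p * pdx w p + pdy v p * pdy w p) / v p)
    (heq2 : ∀ p ∈ Ω,
      pdx (pdx v) p + pdy (pdy v) p + pdx v p / p.1 =
        ((pdx v p) ^ 2 + (pdy v p) ^ 2) / v p -
          (v p) ^ 3 * ((pdx w p) ^ 2 + (pdy w p) ^ 2) / p.1 ^ 2)
    (heq3 : ∀ p ∈ Ω, pdx v p * pdx w p + pdy v p * pdy w p = 0) :
    (∀ p ∈ Ω,
      pdx (fun q => q.1 ^ 2 * (pdx v q) ^ 2 / ((v q) ^ 2 * (pdy w q) ^ 2) + (v q) ^ 2) p = 0 ∧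
      pdy (fun q => q.1 ^ 2 * (pdx v q) ^ 2 / ((v q) ^ 2 * (pdy w q) ^ 2) + (v q) ^ 2) p = 0) ∧
    ∀ p ∈ Ω, ∀ q ∈ Ω,
      p.1 ^ 2 * (pdx v p) ^ 2 / ((v p) ^ 2 * (pdy w p) ^ 2) + (v p) ^ 2 =
        q.1 ^ 2 * (pdx v q) ^ 2 / ((v q) ^ 2 * (pdy w q) ^ 2) + (v q) ^ 2 := by
  have hv' : ∀ p ∈ Ω, ContDiffAt ℝ 2 v p := fun p hp => hv.contDiffAt (hΩ.mem_nhds hp)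
  have hw' : ∀ p ∈ Ω, ContDiffAt ℝ 2 w p := fun p hp => hw.contDiffAt (hΩ.mem_nhds hp)
  have hgrad : ∀ p ∈ Ω, pdx (Papapetrou.cSq v w) p = 0 ∧ pdy (Papapetrou.cSq v w) p = 0 :=
    fun p hp => Papapetrou.pdx_pdy_cSq_eq_zero (hv' p hp) (hw' p hp) (hx p hp).ne'
      (hvpos p hp).ne' (hwy p hp) (heq1 p hp) (heq2 p hp)
      (eventually_of_mem (hΩ.mem_nhds hp) heq3)
  have hdiff : DifferentiableOn ℝ (Papapetrou.cSq v w) Ω := fun p hp =>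
    (Papapetrou.hasFDerivAt_cSq ((hv' p hp).differentiableAt (by norm_num))
      (hv' p hp).differentiableAt_pdx (hw' p hp).differentiableAt_pdy (hvpos p hp).ne'
      (hwy p hp)).differentiableAt.differentiableWithinAt
  refine ⟨hgrad, fun p hp q hq => ?_⟩
  exact hΩ.is_const_of_fderiv_eq_zero hconn.isPreconnected hdiff
    (fun r hr => fderiv_eq_zero_of_pdx_pdy (hgrad r hr).1 (hgrad r hr).2) hp hq
end

section
/- Define on the half-plane Ω = {(x,y) ∈ ℝ² : x > 0} the functions u(x,y) = 2y, f(x,y) = x², p(x,y) = −x². Then (subscripts denoting partial derivatives): f_xx + f_yy − f_x/x = 0, p_x = (f_y² − f_x²)/(2x), p_y = −f_x f_y/x, f_x = x·u_y, f_y = −x·u_x, p_x = −(f_x² − f_y²)/(2x), p_y = −f_x f_y/x, and the dust density ρ = (f_x² + f_y²)/(x²·e^p) equals 4·e^{x²}. -/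
section OneCoordinate

variable {g : ℝ → ℝ} {g' : ℝ} {q : ℝ × ℝ}

theorem fderiv_comp_fst (h : HasDerivAt g g' q.1) :
    fderiv ℝ (fun p : ℝ × ℝ => g p.1) q = g' • ContinuousLinearMap.fst ℝ ℝ ℝ :=
  (h.comp_hasFDerivAt q hasFDerivAt_fst).fderiv

theorem fderiv_comp_snd (h : HasDerivAt g g' q.2) :
    fderiv ℝ (fun p : ℝ × ℝ => g p.2) q = g' • ContinuousLinearMap.snd ℝ ℝ ℝ :=
  (h.comp_hasFDerivAt q hasFDerivAt_snd).fderiv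

theorem pdx_comp_fst (h : HasDerivAt g g' q.1) : pdx (fun p => g p.1) q = g' := by
  simp [pdx, fderiv_comp_fst h]

theorem pdy_comp_fst (h : HasDerivAt g g' q.1) : pdy (fun p => g p.1) q = 0 := by
  simp [pdy, fderiv_comp_fst h]

theorem pdx_comp_snd (h : HasDerivAt g g' q.2) : pdx (fun p => g p.2) q = 0 := by
  simp [pdx, fderiv_comp_snd h]

theorem pdy_comp_snd (h : HasDerivAt g g' q.2) : pdy (fun p => g p.2) q = g' := by
  simp [pdy, fderiv_comp_snd h]

end OneCoordinate

/-- **The 'infinite plate' row of Table 1: the rotating dust wall.**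
On the half-plane `{x > 0}` the functions `u = 2y`, `f = x²`, `p = −x²`
satisfy the van Stockum dust equations, the companion relations
`f_x = x u_y`, `f_y = −x u_x`, and the dust density
`(f_x² + f_y²)/(x² e^p)` equals `4 e^{x²}`. -/
theorem infinite_plate_example
    (u f P : ℝ × ℝ → ℝ)
    (hu : ∀ p : ℝ × ℝ, u p = 2 * p.2)
    (hf : ∀ p : ℝ × ℝ, f p = p.1 ^ 2)
    (hP : ∀ p : ℝ × ℝ, P p = -p.1 ^ 2) :
    ∀ p : ℝ × ℝ, 0 < p.1 →
      (pdx (pdx f) p + pdy (pdy f) p - pdx f p / p.1 = 0) ∧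
      (pdx P p = ((pdy f p) ^ 2 - (pdx f p) ^ 2) / (2 * p.1)) ∧
      (pdy P p = -(pdx f p * pdy f p) / p.1) ∧
      (pdx f p = p.1 * pdy u p) ∧
      (pdy f p = -p.1 * pdx u p) ∧
      (pdx P p = -((pdx f p) ^ 2 - (pdy f p) ^ 2) / (2 * p.1)) ∧
      (pdy P p = -(pdx f p * pdy f p) / p.1) ∧
      (((pdx f p) ^ 2 + (pdy f p) ^ 2) / (p.1 ^ 2 * Real.exp (P p)) =
        4 * Real.exp (p.1 ^ 2)) := by
  obtain rfl : u = fun p => 2 * p.2 := funext hu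
  obtain rfl : f = fun p => p.1 ^ 2 := funext hf
  obtain rfl : P = fun p => -p.1 ^ 2 := funext hP
  have hsq (x : ℝ) : HasDerivAt (fun x => x ^ 2) (2 * x) x := by
    simpa using hasDerivAt_pow 2 x
  have hdouble (x : ℝ) : HasDerivAt (fun x => 2 * x) 2 x := by
    simpa using (hasDerivAt_id x).const_mul 2
  have hfx : pdx (fun p : ℝ × ℝ => p.1 ^ 2) = fun q => 2 * q.1 :=
    funext fun q => pdx_comp_fst (hsq q.1)
  have hfy : pdy (fun p : ℝ × ℝ => p.1 ^ 2) = fun _ => 0 :=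
    funext fun q => pdy_comp_fst (hsq q.1)
  intro p hp
  have hfxx : pdx (fun q : ℝ × ℝ => 2 * q.1) p = 2 := pdx_comp_fst (hdouble p.1)
  have hfyy : pdy (fun _ : ℝ × ℝ => (0 : ℝ)) p = 0 :=
    pdy_comp_fst (g := fun _ => 0) (hasDerivAt_const p.1 0)
  have hPx : pdx (fun p : ℝ × ℝ => -p.1 ^ 2) p = -(2 * p.1) := pdx_comp_fst (hsq p.1).neg
  have hPy : pdy (fun p : ℝ × ℝ => -p.1 ^ 2) p = 0 := pdy_comp_fst (hsq p.1).neg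
  have hux : pdx (fun p : ℝ × ℝ => 2 * p.2) p = 0 := pdx_comp_snd (hdouble p.2)
  have huy : pdy (fun p : ℝ × ℝ => 2 * p.2) p = 2 := pdy_comp_snd (hdouble p.2)
  rw [hfx, hfy, hfxx, hfyy, hPx, hPy, hux, huy, Real.exp_neg]
  refine ⟨?_, ?_, ?_, ?_, ?_, ?_, ?_, ?_⟩ <;> field_simp <;> ring
end

section
/- Define on Ω = {(x,y) ∈ ℝ² : x > 0} (so that R := √(x² + y²) > 0) the functions u(x,y) = −2y/R³, f(x,y) = 2x²/R³, p(x,y) = x²(x² − 8y²)/(2(x² + y²)⁴). Then (subscripts denoting partial derivatives): f_xx + f_yy − f_x/x = 0, p_x = (f_y² − f_x²)/(2x), p_y = −f_x f_y/x, f_x = x·u_y, f_y = −x·u_x, and the dust density ρ = (f_x² + f_y²)/(x²·e^p) equals 4(x² + 4y²)/((x² + y²)⁴·e^p). -/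
open ContinuousLinearMap Filter Topology

noncomputable def gradientForm (a b : ℝ) : ℝ × ℝ →L[ℝ] ℝ :=
  a • fst ℝ ℝ ℝ + b • snd ℝ ℝ ℝ

@[simp]
lemma gradientForm_apply (a b : ℝ) (v : ℝ × ℝ) :
    gradientForm a b v = a * v.1 + b * v.2 :=
  rfl

noncomputable def radius (z : ℝ × ℝ) : ℝ := √(z.1 ^ 2 + z.2 ^ 2)

section

variable {f g h N : ℝ × ℝ → ℝ} {a b : ℝ} {q : ℝ × ℝ}

lemma HasFDerivAt.hasFDerivAt_gradientForm {L : ℝ × ℝ →L[ℝ] ℝ} (hf : HasFDerivAt f L q) :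
    HasFDerivAt f (gradientForm (L (1, 0)) (L (0, 1))) q :=
  hf.congr_fderiv <| by ext <;> simp

lemma pdx_eq_of_hasFDerivAt (hf : HasFDerivAt f (gradientForm a b) q) : pdx f q = a := by
  simp [pdx, hf.fderiv]

lemma pdy_eq_of_hasFDerivAt (hf : HasFDerivAt f (gradientForm a b) q) : pdy f q = b := by
  simp [pdy, hf.fderiv]

lemma pdx_pdx_eq_of_eventually_hasFDerivAt
    (hf : ∀ᶠ z in 𝓝 q, HasFDerivAt f (gradientForm (g z) (h z)) z)
    (hg : HasFDerivAt g (gradientForm a b) q) : pdx (pdx f) q = a := by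
  have hfg : pdx f =ᶠ[𝓝 q] g := hf.mono fun _ => pdx_eq_of_hasFDerivAt
  exact pdx_eq_of_hasFDerivAt (hg.congr_of_eventuallyEq hfg)

lemma pdy_pdy_eq_of_eventually_hasFDerivAt
    (hf : ∀ᶠ z in 𝓝 q, HasFDerivAt f (gradientForm (g z) (h z)) z)
    (hh : HasFDerivAt h (gradientForm a b) q) : pdy (pdy f) q = b := by
  have hfh : pdy f =ᶠ[𝓝 q] h := hf.mono fun _ => pdy_eq_of_hasFDerivAt
  exact pdy_eq_of_hasFDerivAt (hh.congr_of_eventuallyEq hfh)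

lemma radius_sq (z : ℝ × ℝ) : radius z ^ 2 = z.1 ^ 2 + z.2 ^ 2 :=
  Real.sq_sqrt (by positivity)

lemma continuous_radius : Continuous radius := by
  unfold radius
  fun_prop

lemma radius_pos_of_fst_pos (hq : 0 < q.1) : 0 < radius q :=
  Real.sqrt_pos.2 (by positivity)

lemma hasFDerivAt_radius (hq : 0 < radius q) :
    HasFDerivAt radius (gradientForm (q.1 / radius q) (q.2 / radius q)) q := by
  have hs : HasFDerivAt (fun z : ℝ × ℝ => √(z.1 ^ 2 + z.2 ^ 2)) _ q :=
    ((hasFDerivAt_fst.pow 2).add (hasFDerivAt_snd.pow 2)).sqrt (Real.sqrt_pos.1 hq).ne'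
  refine hs.congr_fderiv ?_
  ext <;> simp [radius] <;> field_simp

lemma HasFDerivAt.div_radius_pow (hN : HasFDerivAt N (gradientForm a b) q) (hq : 0 < radius q)
    (n : ℕ) :
    HasFDerivAt (fun z => N z / radius z ^ n)
      (gradientForm ((a * (q.1 ^ 2 + q.2 ^ 2) - n * q.1 * N q) / radius q ^ (n + 2))
        ((b * (q.1 ^ 2 + q.2 ^ 2) - n * q.2 * N q) / radius q ^ (n + 2))) q := by
  have hinv := (hasDerivAt_inv (pow_ne_zero n hq.ne')).comp_hasFDerivAt q
    ((hasFDerivAt_radius hq).pow n)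
  simp_rw [div_eq_mul_inv]
  refine (hN.mul hinv).congr_fderiv ?_
  rw [← radius_sq q]
  ext <;> rcases n with _ | n <;> simp <;> field_simp <;> ring

lemma hasFDerivAt_dipole_f (hq : 0 < radius q) :
    HasFDerivAt (fun z => 2 * z.1 ^ 2 / radius z ^ 3)
      (gradientForm ((4 * q.1 * q.2 ^ 2 - 2 * q.1 ^ 3) / radius q ^ 5)
        (-6 * q.1 ^ 2 * q.2 / radius q ^ 5)) q := by
  convert ((hasFDerivAt_fst.pow 2).const_mul 2).hasFDerivAt_gradientForm.div_radius_pow hq 3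
    using 2 <;> simp <;> ring

lemma hasFDerivAt_dipole_u (hq : 0 < radius q) :
    HasFDerivAt (fun z => -2 * z.2 / radius z ^ 3)
      (gradientForm (6 * q.1 * q.2 / radius q ^ 5)
        ((4 * q.2 ^ 2 - 2 * q.1 ^ 2) / radius q ^ 5)) q := by
  convert (hasFDerivAt_snd.const_mul (-2)).hasFDerivAt_gradientForm.div_radius_pow hq 3
    using 2 <;> simp <;> ring

lemma hasFDerivAt_dipole_fx (hq : 0 < radius q) :
    HasFDerivAt (fun z => (4 * z.1 * z.2 ^ 2 - 2 * z.1 ^ 3) / radius z ^ 5)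
      (gradientForm ((4 * q.1 ^ 4 - 22 * q.1 ^ 2 * q.2 ^ 2 + 4 * q.2 ^ 4) / radius q ^ 7)
        ((18 * q.1 ^ 3 * q.2 - 12 * q.1 * q.2 ^ 3) / radius q ^ 7)) q := by
  convert (((hasFDerivAt_fst.const_mul 4).mul (hasFDerivAt_snd.pow 2)).sub
    ((hasFDerivAt_fst.pow 3).const_mul 2)).hasFDerivAt_gradientForm.div_radius_pow hq 5
    using 2 <;> simp <;> ring

lemma hasFDerivAt_dipole_fy (hq : 0 < radius q) :
    HasFDerivAt (fun z => -6 * z.1 ^ 2 * z.2 / radius z ^ 5)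
      (gradientForm ((18 * q.1 ^ 3 * q.2 - 12 * q.1 * q.2 ^ 3) / radius q ^ 7)
        ((-6 * q.1 ^ 4 + 24 * q.1 ^ 2 * q.2 ^ 2) / radius q ^ 7)) q := by
  convert (((hasFDerivAt_fst.pow 2).const_mul (-6)).mul
    hasFDerivAt_snd).hasFDerivAt_gradientForm.div_radius_pow hq 5 using 2 <;> simp <;> ring

lemma hasFDerivAt_dipole_P (hq : 0 < radius q) :
    HasFDerivAt (fun z => z.1 ^ 2 * (z.1 ^ 2 - 8 * z.2 ^ 2) / (2 * (z.1 ^ 2 + z.2 ^ 2) ^ 4))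
      (gradientForm ((-2 * q.1 ^ 5 + 26 * q.1 ^ 3 * q.2 ^ 2 - 8 * q.1 * q.2 ^ 4) / radius q ^ 10)
        ((-12 * q.1 ^ 4 * q.2 + 24 * q.1 ^ 2 * q.2 ^ 3) / radius q ^ 10)) q := by
  have hP :
      (fun z : ℝ × ℝ => z.1 ^ 2 * (z.1 ^ 2 - 8 * z.2 ^ 2) / (2 * (z.1 ^ 2 + z.2 ^ 2) ^ 4)) =
        fun z => 2⁻¹ * (z.1 ^ 2 * (z.1 ^ 2 - 8 * z.2 ^ 2)) / radius z ^ 8 := by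
    funext z
    rw [← radius_sq]
    ring
  rw [hP]
  convert (((hasFDerivAt_fst.pow 2).mul ((hasFDerivAt_fst.pow 2).sub
    ((hasFDerivAt_snd.pow 2).const_mul 8))).const_mul 2⁻¹).hasFDerivAt_gradientForm
    |>.div_radius_pow hq 8 using 2 <;> simp <;> ring

end

/-- **The 'point dipole' row of Table 1: the Bonnor–Bonnor cloud.**
On `{x > 0}`, with `R = √(x² + y²)`, the functions `u = −2y/R³`,
`f = 2x²/R³`, `p = x²(x² − 8y²)/(2(x² + y²)⁴)` satisfy the van Stockum dust
equations, the companion relations `f_x = x u_y`, `f_y = −x u_x`, and the dust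
density `(f_x² + f_y²)/(x² e^p)` equals `4(x² + 4y²)/((x² + y²)⁴ e^p)`. -/
theorem point_dipole_example
    (u f P : ℝ × ℝ → ℝ)
    (hu : ∀ p : ℝ × ℝ, u p = -2 * p.2 / Real.sqrt (p.1 ^ 2 + p.2 ^ 2) ^ 3)
    (hf : ∀ p : ℝ × ℝ, f p = 2 * p.1 ^ 2 / Real.sqrt (p.1 ^ 2 + p.2 ^ 2) ^ 3)
    (hP : ∀ p : ℝ × ℝ,
      P p = p.1 ^ 2 * (p.1 ^ 2 - 8 * p.2 ^ 2) / (2 * (p.1 ^ 2 + p.2 ^ 2) ^ 4)) :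
    ∀ p : ℝ × ℝ, 0 < p.1 →
      (pdx (pdx f) p + pdy (pdy f) p - pdx f p / p.1 = 0) ∧
      (pdx P p = ((pdy f p) ^ 2 - (pdx f p) ^ 2) / (2 * p.1)) ∧
      (pdy P p = -(pdx f p * pdy f p) / p.1) ∧
      (pdx f p = p.1 * pdy u p) ∧
      (pdy f p = -p.1 * pdx u p) ∧
      (((pdx f p) ^ 2 + (pdy f p) ^ 2) / (p.1 ^ 2 * Real.exp (P p)) =
        4 * (p.1 ^ 2 + 4 * p.2 ^ 2) / ((p.1 ^ 2 + p.2 ^ 2) ^ 4 * Real.exp (P p))) := by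
  obtain rfl : u = fun z => -2 * z.2 / radius z ^ 3 := funext hu
  obtain rfl : f = fun z => 2 * z.1 ^ 2 / radius z ^ 3 := funext hf
  obtain rfl : P = fun z => z.1 ^ 2 * (z.1 ^ 2 - 8 * z.2 ^ 2) / (2 * (z.1 ^ 2 + z.2 ^ 2) ^ 4) :=
    funext hP
  intro p hp
  have hr := radius_pos_of_fst_pos hp
  have hf_near : ∀ᶠ z in 𝓝 p, HasFDerivAt (fun z => 2 * z.1 ^ 2 / radius z ^ 3) _ z :=
    (continuousAt_const.eventually_lt continuous_radius.continuousAt hr).mono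
      fun _ => hasFDerivAt_dipole_f
  rw [pdx_pdx_eq_of_eventually_hasFDerivAt hf_near (hasFDerivAt_dipole_fx hr),
    pdy_pdy_eq_of_eventually_hasFDerivAt hf_near (hasFDerivAt_dipole_fy hr),
    pdx_eq_of_hasFDerivAt (hasFDerivAt_dipole_f hr),
    pdy_eq_of_hasFDerivAt (hasFDerivAt_dipole_f hr),
    pdx_eq_of_hasFDerivAt (hasFDerivAt_dipole_u hr),
    pdy_eq_of_hasFDerivAt (hasFDerivAt_dipole_u hr),
    pdx_eq_of_hasFDerivAt (hasFDerivAt_dipole_P hr),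
    pdy_eq_of_hasFDerivAt (hasFDerivAt_dipole_P hr),
    ← radius_sq p]
  have hr_sq := radius_sq p
  refine ⟨?_, ?_, ?_, ?_, ?_, ?_⟩ <;> field_simp <;> grind
end

section
/- Let b > 0, x > 0 and y ∈ ℝ. Set R⁺ = √(x² + (y + b)²), R⁻ = √(x² + (y − b)²), N = x² + y² − b², and u = log((y + b + R⁺)/(y − b + R⁻)). Then (N − R⁺·R⁻)²/(2b²x⁴) = (2/b²)·sinh⁴(u/2). (Note that y − b + R⁻ > 0 and y + b + R⁺ > 0 since x > 0, so u is well defined.) -/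
/-! With `A = y + b + R⁺` and `B = y - b + R⁻` (both positive because `x ≠ 0`), the relations
`R±² = x² + (y ± b)²` give the polynomial identity `2AB(R⁺R⁻ - N) = x²(A - B)²`, while
`sinh²(log(A/B)/2) = (A - B)²/(4AB)`. Squaring both and comparing gives the claim. -/

open Real

lemma add_sqrt_sq_add_sq_pos {x : ℝ} (hx : x ≠ 0) (a : ℝ) : 0 < a + √(x ^ 2 + a ^ 2) := by
  have h : |a| < √(x ^ 2 + a ^ 2) := by
    rw [← sqrt_sq_eq_abs]
    exact sqrt_lt_sqrt (sq_nonneg a) (lt_add_of_pos_left _ (sq_pos_of_ne_zero hx))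
  linarith [neg_abs_le a]

lemma Real.sinh_half_log_sq {t : ℝ} (ht : 0 < t) :
    sinh (log t / 2) ^ 2 = (t - 1) ^ 2 / (4 * t) := by
  have hcosh : cosh (2 * (log t / 2)) = cosh (log t / 2) ^ 2 + sinh (log t / 2) ^ 2 :=
    cosh_two_mul _
  rw [mul_div_cancel₀ _ two_ne_zero, cosh_log ht, cosh_sq] at hcosh
  field_simp at hcosh ⊢
  linear_combination -hcosh

lemma sinh_half_log_div_sq {A B : ℝ} (hA : 0 < A) (hB : 0 < B) :
    sinh (log (A / B) / 2) ^ 2 = (A - B) ^ 2 / (4 * (A * B)) := by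
  rw [sinh_half_log_sq (div_pos hA hB)]
  field_simp

lemma finite_rod_key_identity {b x y Rp Rm : ℝ}
    (hRp : Rp ^ 2 = x ^ 2 + (y + b) ^ 2) (hRm : Rm ^ 2 = x ^ 2 + (y - b) ^ 2) :
    2 * (y + b + Rp) * (y - b + Rm) * (Rp * Rm - (x ^ 2 + y ^ 2 - b ^ 2)) =
      x ^ 2 * ((y + b + Rp) - (y - b + Rm)) ^ 2 := by
  linear_combination (2 * (y - b) * Rm + 2 * Rm ^ 2 - x ^ 2) * hRp +
    (2 * (y + b) * Rp + 2 * (x ^ 2 + (y + b) ^ 2) - x ^ 2) * hRm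

theorem finite_rod_isodensity_general (b x y : ℝ) (hx : 0 < x)
    (Rp Rm N u : ℝ)
    (hRp : Rp = Real.sqrt (x ^ 2 + (y + b) ^ 2))
    (hRm : Rm = Real.sqrt (x ^ 2 + (y - b) ^ 2))
    (hN : N = x ^ 2 + y ^ 2 - b ^ 2)
    (hu : u = Real.log ((y + b + Rp) / (y - b + Rm))) :
    (N - Rp * Rm) ^ 2 / (2 * b ^ 2 * x ^ 4) = (2 / b ^ 2) * Real.sinh (u / 2) ^ 4 := by
  have hA : 0 < y + b + Rp := hRp ▸ add_sqrt_sq_add_sq_pos hx.ne' _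
  have hB : 0 < y - b + Rm := hRm ▸ add_sqrt_sq_add_sq_pos hx.ne' _
  have hkey := finite_rod_key_identity (b := b)
    (hRp ▸ sq_sqrt (by positivity) : Rp ^ 2 = _) (hRm ▸ sq_sqrt (by positivity) : Rm ^ 2 = _)
  rw [← hN] at hkey
  rw [show sinh (u / 2) ^ 4 = (sinh (u / 2) ^ 2) ^ 2 by ring, hu, sinh_half_log_div_sq hA hB]
  generalize y + b + Rp = A at hA hkey
  generalize y - b + Rm = B at hB hkey
  have hb_free : (N - Rp * Rm) ^ 2 / (2 * x ^ 4) = 2 * ((A - B) ^ 2 / (4 * (A * B))) ^ 2 := by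
    field_simp
    linear_combination 4 * (2 * A * B * (Rp * Rm - N) + x ^ 2 * (A - B) ^ 2) * hkey
  calc (N - Rp * Rm) ^ 2 / (2 * b ^ 2 * x ^ 4) = (N - Rp * Rm) ^ 2 / (2 * x ^ 4) / b ^ 2 := by ring
    _ = _ := by rw [hb_free]; ring

/-- **The 'finite rod' example (Zsigrai cloud): the boundaries are isodensity
surfaces.**  For `b > 0`, `x > 0`, `y ∈ ℝ`, with `R⁺ = √(x² + (y + b)²)`,
`R⁻ = √(x² + (y − b)²)`, `N = x² + y² − b²` and
`u = log((y + b + R⁺)/(y − b + R⁻))`, one has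
`(N − R⁺R⁻)²/(2b²x⁴) = (2/b²)·sinh⁴(u/2)`. -/
theorem finite_rod_isodensity (b x y : ℝ) (hb : 0 < b) (hx : 0 < x)
    (Rp Rm N u : ℝ)
    (hRp : Rp = Real.sqrt (x ^ 2 + (y + b) ^ 2))
    (hRm : Rm = Real.sqrt (x ^ 2 + (y - b) ^ 2))
    (hN : N = x ^ 2 + y ^ 2 - b ^ 2)
    (hu : u = Real.log ((y + b + Rp) / (y - b + Rm))) :
    (N - Rp * Rm) ^ 2 / (2 * b ^ 2 * x ^ 4) = (2 / b ^ 2) * Real.sinh (u / 2) ^ 4 :=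
  finite_rod_isodensity_general b x y hx Rp Rm N u hRp hRm hN hu
end
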